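/- Let d be a metric on X realized by a cycle C on vertex set X with positive edge weights, m = |X| ≥ 5, vertices in cyclic order v_1,...,v_m. Suppose the no-slack condition d(v_{i-1},v_i) + d(v_i,v_{i+1}) = d(v_{i-1},v_{i+1}) holds for all i. Then the cyclic order of C is determined by d in the following sense: for each i, v_{i+1} is the unique element x ∈ X \ {v_i} minimizing d(v_i, x) among those x satisfying d(v_{i-1}, v_i) + d(v_i, x) = d(v_{i-1}, x). -/
import Mathlib


/-- Sum of the weights along the arc of the cycle from `i` to `j`, going in the
direction of increasing indices; `w k` is the weight of the edge `{v_k, v_{k+1}}`. -/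
noncomputable def arcSum (m : ℕ) (w : ZMod m → ℝ) (i j : ZMod m) : ℝ :=
  ∑ k ∈ Finset.range ((j - i).val), w (i + (k : ZMod m))

/-- The shortest-path distance between vertices `i` and `j` of the positively
weighted cycle on `ZMod m`: the smaller of the two arc lengths. -/
noncomputable def cycleDist (m : ℕ) (w : ZMod m → ℝ) (i j : ZMod m) : ℝ :=
  min (arcSum m w i j) (arcSum m w j i)

section Aux

variable {m : ℕ}

private lemma zmod_val_sub_one [NeZero m] {t : ZMod m} (ht : t ≠ 0) :
    (t - 1).val = t.val - 1 := by
  have h1 : 1 ≤ t.val := Nat.one_le_iff_ne_zero.2 fun h => ht ((ZMod.val_eq_zero t).1 h)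
  have hlt := t.val_lt
  have e : ((t.val - 1 : ℕ) : ZMod m) = t - 1 := by
    rw [Nat.cast_sub h1, Nat.cast_one, ZMod.natCast_zmod_val]
  rw [← e, ZMod.val_cast_of_lt (by omega)]

private lemma sum_range_shift [NeZero m] (f : ZMod m → ℝ) (i : ZMod m) :
    ∑ k ∈ Finset.range m, f (i + (k : ZMod m)) = ∑ t, f t := by
  refine Finset.sum_nbij' (fun k => i + (k : ZMod m)) (fun t => (t - i).val)
    (fun a _ => Finset.mem_univ _) (fun t _ => Finset.mem_range.2 (t - i).val_lt)
    ?_ ?_ ?_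
  · intro a ha
    show ((i + (a : ZMod m)) - i).val = a
    rw [add_sub_cancel_left, ZMod.val_cast_of_lt (Finset.mem_range.1 ha)]
  · intro t _
    show i + (((t - i).val : ℕ) : ZMod m) = t
    rw [ZMod.natCast_zmod_val, add_sub_cancel]
  · intro a _; rfl

/-- The two arcs between distinct vertices together cover the whole cycle. -/
private lemma arc_total [NeZero m] (w : ZMod m → ℝ) {i j : ZMod m} (hij : i ≠ j) :
    arcSum m w i j + arcSum m w j i = ∑ t, w t := by
  have hji : j - i ≠ 0 := sub_ne_zero.2 (Ne.symm hij)
  set n : ℕ := (j - i).val with hn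
  have hn1 : 1 ≤ n := Nat.one_le_iff_ne_zero.2 fun h => hji ((ZMod.val_eq_zero _).1 h)
  have hnm : n < m := (j - i).val_lt
  have hijn : j = i + (n : ZMod m) := by rw [hn, ZMod.natCast_zmod_val]; ring
  have hvij : (i - j).val = m - n := by
    rw [show i - j = -(j - i) by ring, ZMod.neg_val, if_neg hji]
  have harc2 : arcSum m w j i = ∑ k ∈ Finset.range (m - n), w (i + ((n + k : ℕ) : ZMod m)) := by
    rw [arcSum, hvij]
    refine Finset.sum_congr rfl fun k _ => ?_
    congr 1
    rw [hijn]
    push_cast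
    ring
  have harc1 : arcSum m w i j = ∑ k ∈ Finset.range n, w (i + (k : ZMod m)) := rfl
  have hsplit := Finset.sum_range_add (fun k => w (i + (k : ZMod m))) n (m - n)
  have hmn : n + (m - n) = m := by omega
  rw [hmn] at hsplit
  rw [harc1, harc2, ← hsplit, sum_range_shift]

private lemma arc_edge [NeZero m] (hm2 : 1 < m) (w : ZMod m → ℝ) (i : ZMod m) :
    arcSum m w i (i + 1) = w i := by
  have h1 : ((i + 1) - i) = (1 : ZMod m) := by ring
  have hv : ((1 : ZMod m)).val = 1 := by rw [← Nat.cast_one, ZMod.val_cast_of_lt hm2]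
  rw [arcSum, h1, hv, Finset.sum_range_one, Nat.cast_zero, add_zero]

private lemma arc_ge [NeZero m] {w : ZMod m → ℝ} (hw : ∀ e, 0 < w e) {i x : ZMod m}
    (hxi : x ≠ i) : w i ≤ arcSum m w i x := by
  have hn : 0 < (x - i).val := ZMod.val_pos.2 (sub_ne_zero.2 hxi)
  have h := Finset.single_le_sum (f := fun k : ℕ => w (i + (k : ZMod m)))
    (s := Finset.range ((x - i).val)) (fun k _ => (hw _).le) (Finset.mem_range.2 hn)
  simpa [arcSum] using h

private lemma arc_gt [NeZero m] (hm2 : 1 < m) {w : ZMod m → ℝ} (hw : ∀ e, 0 < w e)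
    {i x : ZMod m} (hxi : x ≠ i) (hxi1 : x ≠ i + 1) : w i < arcSum m w i x := by
  have hn0 : (x - i).val ≠ 0 := fun h => hxi (sub_eq_zero.1 ((ZMod.val_eq_zero _).1 h))
  have hn1 : (x - i).val ≠ 1 := by
    intro h
    apply hxi1
    have hx1 : x - i = (1 : ZMod m) := by
      rw [← ZMod.natCast_zmod_val (x - i), h, Nat.cast_one]
    rw [← hx1]; ring
  have hn2 : 2 ≤ (x - i).val := by omega
  have hsub : Finset.range 2 ⊆ Finset.range ((x - i).val) := Finset.range_subset_range.2 hn2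
  have h2 : ∑ k ∈ Finset.range 2, w (i + (k : ZMod m)) ≤ arcSum m w i x :=
    Finset.sum_le_sum_of_subset_of_nonneg hsub (fun k _ _ => (hw _).le)
  have he : ∑ k ∈ Finset.range 2, w (i + (k : ZMod m)) = w i + w (i + 1) := by
    rw [Finset.sum_range_succ, Finset.sum_range_one, Nat.cast_zero, Nat.cast_one, add_zero]
  rw [he] at h2
  linarith [hw (i + 1)]

private lemma arc_step [NeZero m] (w : ZMod m → ℝ) {i x : ZMod m} (hxi : x ≠ i) :
    arcSum m w x i = arcSum m w x (i - 1) + w (i - 1) := by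
  have ht : i - x ≠ 0 := sub_ne_zero.2 (Ne.symm hxi)
  have hpos : 0 < (i - x).val := ZMod.val_pos.2 ht
  obtain ⟨n, hn⟩ : ∃ n, (i - x).val = n + 1 := ⟨(i - x).val - 1, by omega⟩
  have hv : ((i - 1) - x).val = n := by
    rw [show (i - 1) - x = (i - x) - 1 by ring, zmod_val_sub_one ht, hn]
    omega
  have hlast : x + ((n : ℕ) : ZMod m) = i - 1 := by
    rw [← hv, ZMod.natCast_zmod_val]; ring
  rw [arcSum, arcSum, hn, hv, Finset.sum_range_succ, hlast]

private lemma two_lt_sum [NeZero m] {w : ZMod m → ℝ} (hw : ∀ e, 0 < w e) {a b c : ZMod m}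
    (hab : a ≠ b) (hca : c ≠ a) (hcb : c ≠ b) : w a + w b < ∑ t, w t := by
  have hp : ∑ t ∈ ({a, b} : Finset (ZMod m)), w t = w a + w b := Finset.sum_pair hab
  rw [← hp]
  exact Finset.sum_lt_sum_of_subset (Finset.subset_univ _) (Finset.mem_univ c)
    (by simp [hca, hcb]) (hw c) (fun _ _ _ => (hw _).le)

private lemma noslack_key {a b S : ℝ} (ha : 0 < a) (hb : 0 < b) (hab : a + b < S)
    (h : min a (S - a) + min b (S - b) = min (a + b) (S - a - b)) : b ≤ S - b := by
  simp only [min_def] at h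
  split_ifs at h <;> linarith

end Aux

/-- For a no-slack positively weighted cycle realization of `d` on `m ≥ 5`
vertices, the successor `v_{i+1}` of `v_i` is the unique minimizer of `d(v_i, x)`
among all `x ≠ v_i` with `d(v_{i-1}, v_i) + d(v_i, x) = d(v_{i-1}, x)`. -/
theorem stmt_10 (m : ℕ) (hm : 5 ≤ m) (w : ZMod m → ℝ) (hw : ∀ e, 0 < w e)
    (d : ZMod m → ZMod m → ℝ) (hd : ∀ i j, d i j = cycleDist m w i j)
    (hnoslack : ∀ i : ZMod m, d (i - 1) i + d i (i + 1) = d (i - 1) (i + 1)) :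
    ∀ i : ZMod m,
      (i + 1 ≠ i ∧ d (i - 1) i + d i (i + 1) = d (i - 1) (i + 1)) ∧
      ∀ x : ZMod m, x ≠ i → d (i - 1) i + d i x = d (i - 1) x →
        d i (i + 1) ≤ d i x ∧ (d i x ≤ d i (i + 1) → x = i + 1) := by
  haveI : NeZero m := ⟨by omega⟩
  have hm2 : 1 < m := by omega
  set S : ℝ := ∑ t, w t with hS
  have h1 : (1 : ZMod m) ≠ 0 := by
    intro h
    have := ZMod.val_cast_of_lt (show 1 < m by omega)
    rw [Nat.cast_one, h, ZMod.val_zero] at this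
    exact one_ne_zero this.symm
  have h2 : (2 : ZMod m) ≠ 0 := by
    intro h
    have := ZMod.val_cast_of_lt (show 2 < m by omega)
    rw [show ((2 : ℕ) : ZMod m) = (2 : ZMod m) by push_cast; ring, h, ZMod.val_zero] at this
    omega
  have hsucc : ∀ j : ZMod m, j + 1 ≠ j := fun j h => h1 (by linear_combination h)
  have hne2 : ∀ j : ZMod m, j ≠ j + 2 := fun j h => h2 (by linear_combination -h)
  -- the distance between adjacent vertices
  have edge : ∀ j : ZMod m, d j (j + 1) = min (w j) (S - w j) := by
    intro j
    have ht := arc_total w (show j ≠ j + 1 from fun h => hsucc j h.symm)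
    rw [arc_edge hm2 w j] at ht
    have hb : arcSum m w (j + 1) j = S - w j := by rw [hS]; linarith
    rw [hd]
    show min (arcSum m w j (j + 1)) (arcSum m w (j + 1) j) = _
    rw [arc_edge hm2, hb]
  -- the forward arc of length two
  have edge2arc : ∀ j : ZMod m, arcSum m w j (j + 2) = w j + w (j + 1) := by
    intro j
    have hv : ((j + 2) - j).val = 2 := by
      rw [show (j + 2) - j = ((2 : ℕ) : ZMod m) by push_cast; ring,
        ZMod.val_cast_of_lt (by omega)]
    rw [arcSum, hv, Finset.sum_range_succ, Finset.sum_range_one, Nat.cast_zero,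
      Nat.cast_one, add_zero]
  have edge2 : ∀ j : ZMod m, d j (j + 2) = min (w j + w (j + 1)) (S - w j - w (j + 1)) := by
    intro j
    have ht := arc_total w (hne2 j)
    rw [edge2arc j] at ht
    have hb : arcSum m w (j + 2) j = S - w j - w (j + 1) := by rw [hS]; linarith
    rw [hd]
    show min (arcSum m w j (j + 2)) (arcSum m w (j + 2) j) = _
    rw [edge2arc, hb]
  -- no-slack forces every single edge to be a shortest path
  have key : ∀ j : ZMod m, w j ≤ S - w j := by
    intro j
    have hjj : (j - 1) + 1 = j := by ring
    have hjj2 : (j - 1) + 2 = j + 1 := by ring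
    have hj1 : j - 1 ≠ j := fun h => h1 (by linear_combination -h)
    have hc1 : j + 1 ≠ j - 1 := fun h => h2 (by linear_combination h)
    have hab : w (j - 1) + w j < S :=
      two_lt_sum hw hj1 hc1 (hsucc j)
    have hns := hnoslack j
    have e1 : d (j - 1) j = min (w (j - 1)) (S - w (j - 1)) := by
      have := edge (j - 1); rw [hjj] at this; exact this
    have e2 : d j (j + 1) = min (w j) (S - w j) := edge j
    have e3 : d (j - 1) (j + 1) = min (w (j - 1) + w j) (S - w (j - 1) - w j) := by
      have := edge2 (j - 1); rw [hjj2, hjj] at this; exact this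
    rw [e1, e2, e3] at hns
    exact noslack_key (hw _) (hw _) hab hns
  intro i
  refine ⟨⟨hsucc i, hnoslack i⟩, ?_⟩
  intro x hx heq
  have hii : (i - 1) + 1 = i := by ring
  have hdi1 : d (i - 1) i = w (i - 1) := by
    have := edge (i - 1); rw [hii] at this
    rw [this, min_eq_left (key (i - 1))]
  have hdii1 : d i (i + 1) = w i := by
    rw [edge i, min_eq_left (key i)]
  have hFB : arcSum m w i x + arcSum m w x i = S := arc_total w (Ne.symm hx)
  have hstep : arcSum m w x i = arcSum m w x (i - 1) + w (i - 1) := arc_step w hx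
  have hb : d (i - 1) x ≤ arcSum m w x i - w (i - 1) := by
    rw [hd]
    have hmin : cycleDist m w (i - 1) x ≤ arcSum m w x (i - 1) :=
      min_le_right _ _
    linarith
  rcases le_total (arcSum m w i x) (arcSum m w x i) with hc | hc
  · have hdx : d i x = arcSum m w i x := by
      rw [hd]; exact min_eq_left hc
    constructor
    · rw [hdii1, hdx]; exact arc_ge hw hx
    · intro hle
      by_contra hne
      have hgt := arc_gt hm2 hw hx hne
      rw [hdii1, hdx] at hle
      linarith
  · exfalso
    have hdx : d i x = arcSum m w x i := by
      rw [hd]; exact min_eq_right hc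
    rw [hdi1, hdx] at heq
    have hwpos := hw (i - 1)
    linarith
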